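/- arXiv:1902.03391 — 2 statements merged into one kernel-verified Lean document; each statement's English description precedes it below -/
import Mathlib

section
/- Let H be a connected finite simple graph on n ≥ 3 vertices and let u be a median of H, i.e., a vertex minimizing δ(u) = Σ_{v ∈ V(H)} dist_H(u, v). Then WL(F_n, H) ≥ (n − 2) + δ(u): every bijection f from the vertices of the fan F_n to the vertices of H has wirelength at least (n − 2) + δ(u). -/
open SimpleGraph

/-- Fan graph on `Fin n`: core `0`, path `1, …, n-1`. -/
def fanGraph (n : ℕ) : SimpleGraph (Fin n) where
  Adj x y := x ≠ y ∧ (x.val = 0 ∨ y.val = 0 ∨ y.val = x.val + 1 ∨ x.val = y.val + 1)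
  symm := ⟨by rintro x y ⟨h1, h2⟩; exact ⟨h1.symm, by tauto⟩⟩
  loopless := ⟨by rintro x ⟨h1, -⟩; exact h1 rfl⟩

open scoped Classical in
/-- The wirelength of a vertex mapping `f`: the sum over edges of `G` of the distance
in `H` between the images of the endpoints. -/
noncomputable def wirelength {α β : Type*} [Fintype α] (G : SimpleGraph α) (H : SimpleGraph β)
    (f : α → β) : ℕ :=
  ∑ e ∈ G.edgeSet.toFinset,
    Sym2.lift ⟨fun a b => H.dist (f a) (f b), fun _ _ => SimpleGraph.dist_comm⟩ e

/-!
The fan on `m + 1` vertices is the edge-disjoint union of the star at its core `0` and a path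
through the other `m` vertices. Under `f` the star costs `∑ a, dist (f 0) (f a) = δ(f 0) ≥ δ(u)`,
and each of the `m - 1` path edges costs at least `1`, because `f` is injective and `H` is
connected.
-/

namespace SimpleGraph

variable {α γ : Type*}

theorem disjoint_starGraph_map {e : α ↪ γ} {c : γ} (hc : c ∉ Set.range e) (G : SimpleGraph α) :
    Disjoint (starGraph c) (G.map e) := by
  rw [← disjoint_edgeSet, Set.disjoint_left, Sym2.forall]
  rintro x y hxy hmap
  obtain ⟨a, b, -, rfl, rfl⟩ := (map_adj _ _ _ _).mp hmap
  exact (starGraph_adj.mp hxy).2.elim (hc ⟨a, ·⟩) (hc ⟨b, ·⟩)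

theorem sub_one_le_card_edgeSet_pathGraph (m : ℕ) : m - 1 ≤ Nat.card (pathGraph m).edgeSet := by
  cases m with
  | zero => simp
  | succ k => simpa using (pathGraph_connected k).card_vert_le_card_edgeSet_add_one

end SimpleGraph

theorem fanGraph_eq_starGraph_sup_map_pathGraph (m : ℕ) :
    fanGraph (m + 1) = starGraph 0 ⊔ (pathGraph m).map (Fin.succEmb m) := by
  ext x y
  simp only [fanGraph, sup_adj, starGraph_adj, map_adj, pathGraph_adj]
  induction x using Fin.cases <;> induction y using Fin.cases <;> simp [Fin.coe_succEmb]
  rw [Fin.ext_iff]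
  omega

section Wirelength

variable {α β γ : Type*} [Fintype α] (H : SimpleGraph β)

theorem wirelength_eq_sum_edgeFinset (G : SimpleGraph α) [Fintype G.edgeSet] (f : α → β) :
    wirelength G H f =
      ∑ e ∈ G.edgeFinset, Sym2.lift ⟨fun a b => H.dist (f a) (f b), fun _ _ => dist_comm⟩ e := by
  unfold wirelength
  exact Finset.sum_congr (by ext; simp) fun _ _ => rfl

theorem wirelength_sup {G₁ G₂ : SimpleGraph α} (h : Disjoint G₁ G₂) (f : α → β) :
    wirelength (G₁ ⊔ G₂) H f = wirelength G₁ H f + wirelength G₂ H f := by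
  classical
  simp only [wirelength_eq_sum_edgeFinset, edgeFinset_sup]
  exact Finset.sum_union (disjoint_edgeFinset.mpr h)

theorem wirelength_map [Fintype γ] (e : α ↪ γ) (G : SimpleGraph α) (f : γ → β) :
    wirelength (G.map e) H f = wirelength G H (f ∘ e) := by
  classical
  simp only [wirelength_eq_sum_edgeFinset, edgeFinset_map, Finset.sum_map]
  refine Finset.sum_congr rfl fun s _ => ?_
  induction s using Sym2.ind
  rfl

theorem wirelength_starGraph (c : α) (f : α → β) :
    wirelength (starGraph c) H f = ∑ a, H.dist (f c) (f a) := by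
  classical
  have hedges : (starGraph c).edgeFinset = (Finset.univ.erase c).image (s(c, ·)) := by
    ext e
    induction e using Sym2.ind
    simp only [mem_edgeFinset, mem_edgeSet, starGraph_adj, Finset.mem_image, Finset.mem_erase,
      Finset.mem_univ, and_true, Sym2.eq_iff]
    constructor
    · rintro ⟨hne, rfl | rfl⟩
      exacts [⟨_, hne.symm, .inl ⟨rfl, rfl⟩⟩, ⟨_, hne, .inr ⟨rfl, rfl⟩⟩]
    · rintro ⟨a, ha, ⟨rfl, rfl⟩ | ⟨rfl, rfl⟩⟩
      exacts [⟨ha.symm, .inl rfl⟩, ⟨ha, .inr rfl⟩]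
  rw [wirelength_eq_sum_edgeFinset, hedges,
    Finset.sum_image fun _ _ _ _ h => Sym2.congr_right.mp h]
  exact Finset.sum_erase _ dist_self

theorem card_edgeSet_le_wirelength (G : SimpleGraph α) (hH : H.Preconnected) {f : α → β}
    (hf : Function.Injective f) : Nat.card G.edgeSet ≤ wirelength G H f := by
  classical
  rw [wirelength_eq_sum_edgeFinset, Nat.card_eq_fintype_card, ← edgeFinset_card,
    Finset.card_eq_sum_ones]
  refine Finset.sum_le_sum fun e he => ?_
  induction e using Sym2.ind with
  | h a b => exact (hH _ _).pos_dist_of_ne (hf.ne (G.ne_of_adj (by simpa using he)))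

end Wirelength

theorem wirelength_fan_lower_bound_general
    {V : Type*} [Fintype V] (H : SimpleGraph V) (n : ℕ)
    (hconn : H.Connected)
    (u : V) (hmed : ∀ v : V, (∑ w : V, H.dist u w) ≤ ∑ w : V, H.dist v w)
    (f : Fin n ≃ V) :
    (n - 2) + ∑ w : V, H.dist u w ≤ wirelength (fanGraph n) H f := by
  obtain ⟨m, rfl⟩ := Nat.exists_eq_add_one.mpr (f.symm u).pos
  have hstar : ∑ w, H.dist u w ≤ ∑ a, H.dist (f 0) (f a) :=
    (hmed (f 0)).trans_eq (f.sum_comp _).symm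
  have hpath : m - 1 ≤ wirelength (pathGraph m) H (f ∘ Fin.succEmb m) :=
    (sub_one_le_card_edgeSet_pathGraph m).trans <| card_edgeSet_le_wirelength H _
      hconn.preconnected (f.injective.comp (Fin.succEmb m).injective)
  have hcore : (0 : Fin (m + 1)) ∉ Set.range (Fin.succEmb m) := by simp [Fin.coe_succEmb]
  rw [fanGraph_eq_starGraph_sup_map_pathGraph, wirelength_sup H (disjoint_starGraph_map hcore _),
    wirelength_starGraph, wirelength_map]
  omega

theorem wirelength_fan_lower_bound
    {V : Type*} [Fintype V] [DecidableEq V] (H : SimpleGraph V) (n : ℕ)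
    (hcard : Fintype.card V = n) (hn : 3 ≤ n) (hconn : H.Connected)
    (u : V) (hmed : ∀ v : V, (∑ w : V, H.dist u w) ≤ ∑ w : V, H.dist v w)
    (f : Fin n ≃ V) :
    (n - 2) + ∑ w : V, H.dist u w ≤ wirelength (fanGraph n) H f :=
  wirelength_fan_lower_bound_general H n hconn u hmed f
end

section
/- Let H be a connected finite simple graph on n ≥ 3 vertices and let u be a median of H, i.e., a vertex minimizing δ(u) = Σ_{v ∈ V(H)} dist_H(u, v). If H − u contains a Hamiltonian path, then WL(F_n, H) = (n − 2) + δ(u); in particular there exists a bijection f from the vertices of the fan F_n to the vertices of H with wirelength exactly (n − 2) + δ(u). -/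
open SimpleGraph

/-!
Removing the core `0` splits the edges of the fan into the star at the core and a path on the
remaining `n - 1` vertices. Under a bijection `f` the star costs exactly `δ(f 0) ≥ δ(u)`, and
each of the `n - 2` path edges costs at least `1` because `f` is injective. Sending the core to
`u` and the path along a Hamiltonian path of `H - u` attains both bounds.
-/

namespace SimpleGraph

section Wirelength

variable {α β : Type*} [Fintype α] (G : SimpleGraph α) (H : SimpleGraph β) (f : α → β)

lemma wirelength_eq_sum_edgeFinset [Fintype G.edgeSet] :
    wirelength G H f = ∑ e ∈ G.edgeFinset,
      Sym2.lift ⟨fun a b => H.dist (f a) (f b), fun _ _ => dist_comm⟩ e := by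
  rw [wirelength]
  congr 1
  ext e
  simp

lemma wirelength_eq_sum_neighborFinset_add [DecidableEq α] [DecidableRel G.Adj] (c : α) :
    wirelength G H f = ∑ x ∈ G.neighborFinset c, H.dist (f c) (f x) +
      wirelength (G.deleteIncidenceSet c) H f := by
  rw [wirelength_eq_sum_edgeFinset, wirelength_eq_sum_edgeFinset,
    edgeFinset_deleteIncidenceSet_eq_sdiff, ← Finset.sum_sdiff (G.incidenceFinset_subset c),
    add_comm]
  congr 1
  have hinc : G.incidenceFinset c = (G.neighborFinset c).image (s(c, ·)) := by
    ext e
    induction e with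
    | _ a b =>
      simp only [mem_incidenceFinset, mk'_mem_incidenceSet_iff, Finset.mem_image,
        mem_neighborFinset, Sym2.eq_iff]
      constructor
      · rintro ⟨hab, rfl | rfl⟩
        exacts [⟨b, hab, .inl ⟨rfl, rfl⟩⟩, ⟨a, hab.symm, .inr ⟨rfl, rfl⟩⟩]
      · rintro ⟨x, hcx, ⟨rfl, rfl⟩ | ⟨rfl, rfl⟩⟩
        exacts [⟨hcx, .inl rfl⟩, ⟨hcx.symm, .inr rfl⟩]
  rw [hinc, Finset.sum_image fun x _ y _ h => Sym2.congr_right.mp h]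
  rfl

variable {G H f}

lemma ncard_edgeSet_le_wirelength (hH : H.Connected) (hf : Function.Injective f) :
    G.edgeSet.ncard ≤ wirelength G H f := by
  classical
  rw [← coe_edgeFinset, Set.ncard_coe_finset, wirelength_eq_sum_edgeFinset,
    Finset.card_eq_sum_ones]
  refine Finset.sum_le_sum fun e he => ?_
  induction e with
  | _ a b => exact hH.pos_dist_of_ne (hf.ne (G.ne_of_adj (mem_edgeFinset.mp he)))

lemma wirelength_eq_ncard_edgeSet (hf : ∀ a b, G.Adj a b → H.Adj (f a) (f b)) :
    wirelength G H f = G.edgeSet.ncard := by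
  classical
  rw [← coe_edgeFinset, Set.ncard_coe_finset, wirelength_eq_sum_edgeFinset,
    Finset.card_eq_sum_ones]
  refine Finset.sum_congr rfl fun e he => ?_
  induction e with
  | _ a b => exact dist_eq_one_iff_adj.mpr (hf a b (mem_edgeFinset.mp he))

end Wirelength

lemma ncard_edgeSet_map {V W : Type*} (f : V ↪ W) (G : SimpleGraph V) :
    (G.map f).edgeSet.ncard = G.edgeSet.ncard := by
  rw [edgeSet_map, Set.ncard_image_of_injective _ f.sym2Map.injective]

lemma ncard_edgeSet_pathGraph (m : ℕ) : (pathGraph m).edgeSet.ncard = m - 1 := by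
  cases m with
  | zero => rw [Set.eq_empty_of_isEmpty (pathGraph 0).edgeSet, Set.ncard_empty]
  | succ k =>
    have hedges :
        (pathGraph (k + 1)).edgeSet = Set.range fun i : Fin k => s(i.castSucc, i.succ) := by
      ext e
      induction e with
      | _ a b =>
        simp only [mem_edgeSet, pathGraph_adj, Set.mem_range, Sym2.eq_iff]
        constructor
        · rintro (h | h)
          · exact ⟨⟨a, by omega⟩, .inl ⟨rfl, Fin.ext h⟩⟩
          · exact ⟨⟨b, by omega⟩, .inr ⟨rfl, Fin.ext h⟩⟩
        · rintro ⟨i, ⟨rfl, rfl⟩ | ⟨rfl, rfl⟩⟩ <;> simp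
    rw [hedges, Set.ncard_range_of_injective]
    · simp
    · intro i j h
      simp only [Sym2.eq_iff, ← Fin.val_inj, Fin.val_castSucc, Fin.val_succ] at h
      omega

lemma fanGraph_adj_zero {m : ℕ} {x : Fin (m + 1)} : (fanGraph (m + 1)).Adj 0 x ↔ x ≠ 0 := by
  simp [fanGraph, eq_comm]

lemma fanGraph_deleteIncidenceSet_zero (m : ℕ) :
    (fanGraph (m + 1)).deleteIncidenceSet 0 = (pathGraph m).map (Fin.succEmb m) := by
  ext x y
  rw [deleteIncidenceSet_adj, map_adj]
  cases x using Fin.cases <;> cases y using Fin.cases <;>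
    simp [fanGraph, pathGraph_adj, Fin.succ_ne_zero, Fin.succ_inj]
  simp only [← Fin.val_inj]
  omega

section Fan

variable {V : Type*} [Fintype V] {H : SimpleGraph V} {m : ℕ}

lemma wirelength_fanGraph (f : Fin (m + 1) ≃ V) :
    wirelength (fanGraph (m + 1)) H f =
      ∑ w, H.dist (f 0) w + wirelength ((pathGraph m).map (Fin.succEmb m)) H f := by
  classical
  rw [wirelength_eq_sum_neighborFinset_add _ _ _ 0, fanGraph_deleteIncidenceSet_zero]
  congr 1
  have hnbr : (fanGraph (m + 1)).neighborFinset 0 = {0}ᶜ := by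
    ext x
    simp [fanGraph_adj_zero]
  rw [hnbr, ← Equiv.sum_comp f, ← Finset.sum_compl_add_sum {0}, Finset.sum_singleton,
    dist_self, add_zero]

lemma sub_one_add_sum_dist_le_wirelength_fanGraph (hH : H.Connected) (f : Fin (m + 1) ≃ V) :
    m - 1 + ∑ w, H.dist (f 0) w ≤ wirelength (fanGraph (m + 1)) H f := by
  rw [wirelength_fanGraph, add_comm]
  gcongr
  calc m - 1 = ((pathGraph m).map (Fin.succEmb m)).edgeSet.ncard := by
        rw [ncard_edgeSet_map, ncard_edgeSet_pathGraph]
    _ ≤ _ := ncard_edgeSet_le_wirelength hH f.injective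

lemma exists_wirelength_fanGraph_eq (hV : Fintype.card V = m + 1) (u : V)
    (φ : Copy (pathGraph m) (H.induce {u}ᶜ)) :
    ∃ f : Fin (m + 1) ≃ V, wirelength (fanGraph (m + 1)) H f = m - 1 + ∑ w, H.dist u w := by
  let g : Fin (m + 1) → V := Fin.cons u fun i => φ i
  have hg : Function.Injective g := Fin.cons_injective_iff.mpr
    ⟨fun ⟨i, hi⟩ => (φ i).2 hi, Subtype.val_injective.comp φ.injective⟩
  let f := Equiv.ofBijective g
    ((Fintype.bijective_iff_injective_and_card g).mpr ⟨hg, by simp [hV]⟩)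
  have hf : ∀ a b, ((pathGraph m).map (Fin.succEmb m)).Adj a b → H.Adj (f a) (f b) := by
    rintro _ _ ⟨-, i, j, hij, rfl, rfl⟩
    simpa [f, g] using φ.toHom.map_adj hij
  refine ⟨f, ?_⟩
  rw [wirelength_fanGraph, wirelength_eq_ncard_edgeSet hf, ncard_edgeSet_map,
    ncard_edgeSet_pathGraph, add_comm]
  rfl

end Fan

end SimpleGraph

theorem wirelength_fan_eq_of_hamiltonian_path_general
    {V : Type*} [Fintype V] [DecidableEq V] (H : SimpleGraph V) (n : ℕ)
    (hcard : Fintype.card V = n) (hconn : H.Connected)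
    (u : V) (hmed : ∀ v : V, (∑ w : V, H.dist u w) ≤ ∑ w : V, H.dist v w)
    (hham : ∃ (a b : ({u}ᶜ : Set V)) (p : (H.induce ({u}ᶜ : Set V)).Walk a b),
      p.IsHamiltonian) :
    (∀ f : Fin n ≃ V, (n - 2) + ∑ w : V, H.dist u w ≤ wirelength (fanGraph n) H f) ∧
    (∃ f : Fin n ≃ V, wirelength (fanGraph n) H f = (n - 2) + ∑ w : V, H.dist u w) := by
  obtain ⟨_, _, p, hp⟩ := hham
  have hlen : p.length + 1 + 1 = n := by
    rw [← Walk.length_support, hp.length_support, Fintype.card_compl_set, Set.card_singleton,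
      ← hcard]
    have hV : 0 < Fintype.card V := Fintype.card_pos_iff.mpr ⟨u⟩
    omega
  subst hlen
  refine ⟨fun f => ?_, ?_⟩
  · have hwl := sub_one_add_sum_dist_le_wirelength_fanGraph hconn f
    have hcore := hmed (f 0)
    omega
  · obtain ⟨f, hf⟩ := exists_wirelength_fanGraph_eq hcard u hp.isPath.pathGraphCopy
    exact ⟨f, by omega⟩

theorem wirelength_fan_eq_of_hamiltonian_path
    {V : Type*} [Fintype V] [DecidableEq V] (H : SimpleGraph V) (n : ℕ)
    (hcard : Fintype.card V = n) (hn : 3 ≤ n) (hconn : H.Connected)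
    (u : V) (hmed : ∀ v : V, (∑ w : V, H.dist u w) ≤ ∑ w : V, H.dist v w)
    (hham : ∃ (a b : ({u}ᶜ : Set V)) (p : (H.induce ({u}ᶜ : Set V)).Walk a b),
      p.IsHamiltonian) :
    (∀ f : Fin n ≃ V, (n - 2) + ∑ w : V, H.dist u w ≤ wirelength (fanGraph n) H f) ∧
    (∃ f : Fin n ≃ V, wirelength (fanGraph n) H f = (n - 2) + ∑ w : V, H.dist u w) :=
  wirelength_fan_eq_of_hamiltonian_path_general H n hcard hconn u hmed hham
end
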